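/- Let λ > 1 and P ∈ ℝ. (i) If ψ : ℝ → ℝ is a strictly positive, twice differentiable, 2π-periodic classical solution of the homogeneous Euler ODE with parameters (λ, P), then P > 0. (ii) If (ψ, (a, b)) is a local solution of the homogeneous Euler ODE with parameters (λ, P), then P ≤ 0 and moreover lim_{θ → a⁺} ψ′(θ)² = −2P and lim_{θ → b⁻} ψ′(θ)² = −2P. -/

import Mathlib

/-!
(i) At a global minimum `θ₀` of the periodic solution, `ψ' θ₀ = 0` and `ψ'' θ₀ ≥ 0`, so the
equation reads `2(λ-1)P = λ²ψ² + λψ''ψ > 0`.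

(ii) With `q = 2(λ-1)/λ`, multiplying the equation by `ψ'/ψ^(q+1)` shows that
`(ψ'² + λ²ψ² + 2P) / ψ^q` is a first integral. Hence `ψ'² = C ψ^q - λ²ψ² - 2P` on `(a, b)`,
which tends to `-2P` at the endpoints because `q > 0`; being a limit of squares, `-2P ≥ 0`.
-/

open Real Set Filter Topology

theorem Function.Periodic.exists_forall_le {α : Type*} [TopologicalSpace α] [LinearOrder α]
    [ClosedIicTopology α] {f : ℝ → α} {c : ℝ} (hp : Function.Periodic f c) (hc : c ≠ 0)
    (hf : Continuous f) : ∃ x, ∀ y, f x ≤ f y := by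
  obtain ⟨_, ⟨x, rfl⟩, hmin⟩ := (hp.compact_of_continuous hc hf).exists_isLeast (range_nonempty f)
  exact ⟨x, fun y => hmin (mem_range_self y)⟩

theorem IsLocalMin.nonneg_of_hasDerivAt_of_hasDerivAt {f f' : ℝ → ℝ} {x c : ℝ}
    (hmin : IsLocalMin f x) (hf : ∀ᶠ y in 𝓝 x, HasDerivAt f (f' y) y)
    (hf' : HasDerivAt f' c x) : 0 ≤ c := by
  by_contra! hc
  have hderiv : deriv f =ᶠ[𝓝 x] f' := hf.mono fun y hy => hy.deriv
  have hmax : IsLocalMax f x := isLocalMax_of_deriv_deriv_neg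
    (by rwa [(hf'.congr_of_eventuallyEq hderiv).deriv])
    (by rw [hderiv.eq_of_nhds]; exact hmin.hasDerivAt_eq_zero hf.self_of_nhds)
    hf.self_of_nhds.continuousAt
  have hconst : ∀ᶠ y in 𝓝 x, f y = f x := (hmin.and hmax).mono fun y hy => le_antisymm hy.2 hy.1
  have hzero : f' =ᶠ[𝓝 x] fun _ => 0 := by
    filter_upwards [hconst.eventually_nhds, hf] with y hy hfy
    exact hfy.unique ((hasDerivAt_const y (f x)).congr_of_eventuallyEq hy)
  exact hc.ne ((hf'.congr_of_eventuallyEq hzero.symm).unique (hasDerivAt_const x 0))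

theorem pressure_pos_of_euler_eq_at_min {lam P y y' y'' : ℝ} (hlam : 1 < lam) (hy : 0 < y)
    (hy' : y' = 0) (hy'' : 0 ≤ y'')
    (hode : 2 * (lam - 1) * P = -(lam - 1) * y' ^ 2 + lam ^ 2 * y ^ 2 + lam * y'' * y) :
    0 < P := by
  have hlam0 : 0 < lam := by linarith
  have : 0 < 2 * (lam - 1) * P := by
    rw [hode, hy']
    nlinarith [mul_pos (pow_pos hlam0 2) (pow_pos hy 2), mul_nonneg (mul_nonneg hlam0.le hy'') hy.le]
  nlinarith

noncomputable def eulerFirstIntegral (lam P : ℝ) (ψ ψ' : ℝ → ℝ) (θ : ℝ) : ℝ :=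
  (ψ' θ ^ 2 + lam ^ 2 * ψ θ ^ 2 + 2 * P) / ψ θ ^ (2 * (lam - 1) / lam)

theorem hasDerivAt_eulerFirstIntegral {lam P θ : ℝ} {ψ ψ' ψ'' : ℝ → ℝ} (hlam : lam ≠ 0)
    (hψ : 0 < ψ θ) (hd1 : HasDerivAt ψ (ψ' θ) θ) (hd2 : HasDerivAt ψ' (ψ'' θ) θ)
    (hode : 2 * (lam - 1) * P =
      -(lam - 1) * ψ' θ ^ 2 + lam ^ 2 * ψ θ ^ 2 + lam * ψ'' θ * ψ θ) :
    HasDerivAt (eulerFirstIntegral lam P ψ ψ') 0 θ := by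
  have hG := ((hd2.fun_pow 2).fun_add ((hd1.fun_pow 2).const_mul (lam ^ 2))).add_const (2 * P)
  have hpow := hd1.rpow_const (p := 2 * (lam - 1) / lam) (Or.inl hψ.ne')
  refine (hG.fun_div hpow (rpow_pos_of_pos hψ _).ne').congr_deriv ?_
  rw [rpow_sub_one hψ.ne', div_eq_zero_iff]
  left
  norm_num
  field_simp
  linear_combination (-2 * ψ' θ * ψ θ ^ (2 * (lam - 1) / lam)) * hode

theorem sq_deriv_eq_of_eulerFirstIntegral_eq {lam P C θ : ℝ} {ψ ψ' : ℝ → ℝ} (hψ : 0 < ψ θ)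
    (hC : eulerFirstIntegral lam P ψ ψ' θ = C) :
    ψ' θ ^ 2 = C * ψ θ ^ (2 * (lam - 1) / lam) - lam ^ 2 * ψ θ ^ 2 - 2 * P := by
  rw [eulerFirstIntegral, div_eq_iff (rpow_pos_of_pos hψ _).ne'] at hC
  linarith

theorem exists_eulerFirstIntegral_eq_on_Ioo {lam P a b : ℝ} {ψ ψ' ψ'' : ℝ → ℝ} (hlam : lam ≠ 0)
    (hpos : ∀ θ ∈ Ioo a b, 0 < ψ θ)
    (hd1 : ∀ θ ∈ Ioo a b, HasDerivAt ψ (ψ' θ) θ)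
    (hd2 : ∀ θ ∈ Ioo a b, HasDerivAt ψ' (ψ'' θ) θ)
    (hode : ∀ θ ∈ Ioo a b, 2 * (lam - 1) * P =
      -(lam - 1) * ψ' θ ^ 2 + lam ^ 2 * ψ θ ^ 2 + lam * ψ'' θ * ψ θ) :
    ∃ C, ∀ θ ∈ Ioo a b, eulerFirstIntegral lam P ψ ψ' θ = C := by
  have hderiv (θ) (hθ : θ ∈ Ioo a b) := hasDerivAt_eulerFirstIntegral hlam (hpos θ hθ)
    (hd1 θ hθ) (hd2 θ hθ) (hode θ hθ)
  exact isOpen_Ioo.exists_is_const_of_deriv_eq_zero isPreconnected_Ioo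
    (fun θ hθ => (hderiv θ hθ).differentiableAt.differentiableWithinAt)
    (fun θ hθ => (hderiv θ hθ).deriv)

theorem tendsto_sq_deriv_of_eulerFirstIntegral_eq {l : Filter ℝ} {lam P C : ℝ} {ψ ψ' : ℝ → ℝ}
    (hlam : 1 < lam) (hψ : Tendsto ψ l (𝓝 0))
    (hC : ∀ᶠ θ in l, 0 < ψ θ ∧ eulerFirstIntegral lam P ψ ψ' θ = C) :
    Tendsto (fun θ => ψ' θ ^ 2) l (𝓝 (-2 * P)) := by
  have hq : 0 < 2 * (lam - 1) / lam := div_pos (by linarith) (by linarith)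
  have hcont : ContinuousAt
      (fun y : ℝ => C * y ^ (2 * (lam - 1) / lam) - lam ^ 2 * y ^ 2 - 2 * P) 0 :=
    ((continuousAt_const.mul (continuousAt_rpow_const 0 _ (Or.inr hq.le))).sub
      (continuousAt_const.mul (continuous_pow 2).continuousAt)).sub continuousAt_const
  have hlim := hcont.tendsto.comp hψ
  rw [zero_rpow hq.ne'] at hlim
  refine (hlim.congr' (hC.mono fun θ h => (sq_deriv_eq_of_eulerFirstIntegral_eq h.1 h.2).symm)).trans ?_
  norm_num

/-- For `λ > 1`: (i) a strictly positive `2π`-periodic classical solution of the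
homogeneous Euler ODE forces `P > 0`; (ii) a local solution forces `P ≤ 0`, and the squared slope
`ψ'(θ)²` tends to `-2P` at both endpoints of the life-time. -/
theorem pressure_sign_lambda_gt_one
    (lam P : ℝ) (hlam : 1 < lam) :
    ((∀ ψ ψ' ψ'' : ℝ → ℝ,
      (∀ θ : ℝ, HasDerivAt ψ (ψ' θ) θ) →
      (∀ θ : ℝ, HasDerivAt ψ' (ψ'' θ) θ) →
      (∀ θ : ℝ, ψ (θ + 2 * Real.pi) = ψ θ) →
      (∀ θ : ℝ, 0 < ψ θ) →
      (∀ θ : ℝ, 2 * (lam - 1) * P =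
        -(lam - 1) * (ψ' θ) ^ 2 + lam ^ 2 * (ψ θ) ^ 2 + lam * (ψ'' θ) * (ψ θ)) →
      0 < P)) ∧
    ((∀ a b : ℝ, a < b → ∀ ψ ψ' ψ'' : ℝ → ℝ,
      ContinuousOn ψ (Set.Icc a b) →
      ψ a = 0 → ψ b = 0 →
      (∀ θ ∈ Set.Ioo a b, 0 < ψ θ) →
      (∀ θ ∈ Set.Ioo a b, HasDerivAt ψ (ψ' θ) θ) →
      (∀ θ ∈ Set.Ioo a b, HasDerivAt ψ' (ψ'' θ) θ) →
      (∀ θ ∈ Set.Ioo a b, 2 * (lam - 1) * P =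
        -(lam - 1) * (ψ' θ) ^ 2 + lam ^ 2 * (ψ θ) ^ 2 + lam * (ψ'' θ) * (ψ θ)) →
      P ≤ 0 ∧
        Filter.Tendsto (fun θ => (ψ' θ) ^ 2) (nhdsWithin a (Set.Ioo a b)) (nhds (-2 * P)) ∧
        Filter.Tendsto (fun θ => (ψ' θ) ^ 2) (nhdsWithin b (Set.Ioo a b)) (nhds (-2 * P)))) := by
  refine ⟨fun ψ ψ' ψ'' hd1 hd2 hper hpos hode => ?_,
    fun a b hab ψ ψ' ψ'' hcont ha hb hpos hd1 hd2 hode => ?_⟩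
  · have hcont : Continuous ψ := continuous_iff_continuousAt.2 fun θ => (hd1 θ).continuousAt
    obtain ⟨θ₀, hmin⟩ := Function.Periodic.exists_forall_le hper two_pi_pos.ne' hcont
    have hmin' : IsLocalMin ψ θ₀ := Eventually.of_forall hmin
    exact pressure_pos_of_euler_eq_at_min hlam (hpos θ₀) (hmin'.hasDerivAt_eq_zero (hd1 θ₀))
      (hmin'.nonneg_of_hasDerivAt_of_hasDerivAt (Eventually.of_forall hd1) (hd2 θ₀)) (hode θ₀)
  · obtain ⟨C, hC⟩ := exists_eulerFirstIntegral_eq_on_Ioo (by positivity) hpos hd1 hd2 hode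
    have hlim (x) (hx : x ∈ Icc a b) (hx0 : ψ x = 0) :
        Tendsto (fun θ => ψ' θ ^ 2) (𝓝[Ioo a b] x) (𝓝 (-2 * P)) :=
      tendsto_sq_deriv_of_eulerFirstIntegral_eq hlam
        (hx0 ▸ (hcont x hx).mono Ioo_subset_Icc_self)
        (eventually_nhdsWithin_of_forall fun θ hθ => ⟨hpos θ hθ, hC θ hθ⟩)
    have hlim_a := hlim a (left_mem_Icc.2 hab.le) ha
    have := left_nhdsWithin_Ioo_neBot hab
    have : 0 ≤ -2 * P := ge_of_tendsto' hlim_a fun θ => sq_nonneg _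
    exact ⟨by linarith, hlim_a, hlim b (right_mem_Icc.2 hab.le) hb⟩
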